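/- arXiv:1303.2087 — 3 statements merged into one kernel-verified Lean document; each statement's English description precedes it below -/
import Mathlib

section
/- Let a DMZIC with weak interference be used n times memorylessly, with input blocks X1^n = (X11,...,X1n) and X2^n = (X21,...,X2n) that are independent of each other (but otherwise arbitrarily distributed within each block), and let Y1^n, Y2^n be the corresponding outputs. Then I(X1^n;Y1^n) + I(X2^n;Y2^n) <= sum_{i=1}^n [ I(X1i;Y1i) + I(X2i;Y2i) ]. -/
open scoped BigOperators

noncomputable section

namespace IT

/-- A probability mass function on a finite type. -/
def IsPMF {α : Type*} [Fintype α] (p : α → ℝ) : Prop :=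
  (∀ a, 0 ≤ p a) ∧ ∑ a, p a = 1

/-- The distribution (pushforward) of a random variable `X` under the pmf `μ`
on the sample space `Ω`. -/
def distOf {Ω α : Type*} [Fintype Ω] [DecidableEq α] (μ : Ω → ℝ) (X : Ω → α) : α → ℝ :=
  fun a => ∑ ω, if X ω = a then μ ω else 0

/-- Shannon entropy (base-2 logarithms) of a pmf on a finite type.
(Recall `Real.logb 2 0 = 0`, so the `0 log 0 = 0` convention is automatic.) -/
def ent {α : Type*} [Fintype α] (p : α → ℝ) : ℝ := -∑ a, p a * Real.logb 2 (p a)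

/-- Entropy `H(X)` of a finite-valued random variable `X` on `(Ω, μ)`. -/
def H {Ω α : Type*} [Fintype Ω] [Fintype α] [DecidableEq α] (μ : Ω → ℝ) (X : Ω → α) : ℝ :=
  ent (distOf μ X)

/-- Mutual information `I(X;Y)`. -/
def MI {Ω α β : Type*} [Fintype Ω] [Fintype α] [DecidableEq α] [Fintype β] [DecidableEq β]
    (μ : Ω → ℝ) (X : Ω → α) (Y : Ω → β) : ℝ :=
  H μ X + H μ Y - H μ (fun ω => (X ω, Y ω))

/-- Conditional mutual information `I(X;Y|Z)`. -/
def CMI {Ω α β γ : Type*} [Fintype Ω] [Fintype α] [DecidableEq α] [Fintype β] [DecidableEq β]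
    [Fintype γ] [DecidableEq γ] (μ : Ω → ℝ) (X : Ω → α) (Y : Ω → β) (Z : Ω → γ) : ℝ :=
  H μ (fun ω => (X ω, Z ω)) + H μ (fun ω => (Y ω, Z ω))
    - H μ (fun ω => (X ω, Y ω, Z ω)) - H μ Z

/-- `B` is conditionally independent of `A` given `C` (a Markov chain `A - C - B`). -/
def CondIndep {Ω α β γ : Type*} [Fintype Ω] [DecidableEq α] [DecidableEq β] [DecidableEq γ]
    (μ : Ω → ℝ) (A : Ω → α) (B : Ω → β) (C : Ω → γ) : Prop :=
  ∀ a b c,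
    distOf μ (fun ω => (A ω, B ω, C ω)) (a, b, c) * distOf μ C c =
      distOf μ (fun ω => (A ω, C ω)) (a, c) * distOf μ (fun ω => (B ω, C ω)) (b, c)

variable {A1 A2 B1 B2 : Type*}

/-- A discrete memoryless interference channel with input alphabets `A1, A2` and
output alphabets `B1, B2`: every pair of inputs yields a pmf on output pairs. -/
def IsChannel [Fintype B1] [Fintype B2] (W : A1 → A2 → B1 × B2 → ℝ) : Prop :=
  ∀ x1 x2, IsPMF (W x1 x2)

/-- DMZIC with weak interference: the transition probability factorizes as
`p(y1,y2|x1,x2) = p(y2|x2) q(y1|x1,y2)`, i.e. one-sided interference together with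
the Markov chain `X2 - (X1,Y2) - Y1`. -/
def WeakZ [Fintype B1] [Fintype B2] (W : A1 → A2 → B1 × B2 → ℝ) : Prop :=
  ∃ (p2 : A2 → B2 → ℝ) (q : A1 → B2 → B1 → ℝ),
    (∀ x2, IsPMF (p2 x2)) ∧ (∀ x1 y2, IsPMF (q x1 y2)) ∧
      ∀ x1 x2 y1 y2, W x1 x2 (y1, y2) = p2 x2 y2 * q x1 y2 y1

/-- Factorization `p(y1,y2|x1,x2) = p(y2|x1,x2) q(y1|x1,y2)`, i.e. the Markov chain
`X2 - (X1,Y2) - Y1`. -/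
def ChainX2X1Y2Y1 [Fintype B1] [Fintype B2] (W : A1 → A2 → B1 × B2 → ℝ) : Prop :=
  ∃ (pa : A1 → A2 → B2 → ℝ) (q : A1 → B2 → B1 → ℝ),
    (∀ x1 x2, IsPMF (pa x1 x2)) ∧ (∀ x1 y2, IsPMF (q x1 y2)) ∧
      ∀ x1 x2 y1 y2, W x1 x2 (y1, y2) = pa x1 x2 y2 * q x1 y2 y1

/-- The `n`-fold memoryless extension of the channel `W`. -/
def nFold (W : A1 → A2 → B1 × B2 → ℝ) (n : ℕ) (a : Fin n → A1) (b : Fin n → A2)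
    (y : (Fin n → B1) × (Fin n → B2)) : ℝ :=
  ∏ i, W (a i) (b i) (y.1 i, y.2 i)

/-- An `(n, M1, M2)` code for the interference channel. -/
structure Code (A1 A2 B1 B2 : Type*) (n M1 M2 : ℕ) where
  enc1 : Fin M1 → Fin n → A1
  enc2 : Fin M2 → Fin n → A2
  dec1 : (Fin n → B1) → Fin M1
  dec2 : (Fin n → B2) → Fin M2

/-- Average probability of error at receiver 1 (messages uniform and independent). -/
def err1 [Fintype B1] [Fintype B2] (W : A1 → A2 → B1 × B2 → ℝ) {n M1 M2 : ℕ}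
    (c : Code A1 A2 B1 B2 n M1 M2) : ℝ :=
  ((M1 : ℝ) * (M2 : ℝ))⁻¹ *
    ∑ w1 : Fin M1, ∑ w2 : Fin M2, ∑ y : (Fin n → B1) × (Fin n → B2),
      if c.dec1 y.1 ≠ w1 then nFold W n (c.enc1 w1) (c.enc2 w2) y else 0

/-- Average probability of error at receiver 2 (messages uniform and independent). -/
def err2 [Fintype B1] [Fintype B2] (W : A1 → A2 → B1 × B2 → ℝ) {n M1 M2 : ℕ}
    (c : Code A1 A2 B1 B2 n M1 M2) : ℝ :=
  ((M1 : ℝ) * (M2 : ℝ))⁻¹ *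
    ∑ w1 : Fin M1, ∑ w2 : Fin M2, ∑ y : (Fin n → B1) × (Fin n → B2),
      if c.dec2 y.2 ≠ w2 then nFold W n (c.enc1 w1) (c.enc2 w2) y else 0

/-- A (nonnegative) rate pair `(R1, R2)` is achievable if there are codes of blocklength `n`,
with at least `2 ^ (n R1)` and `2 ^ (n R2)` messages, whose average error probabilities at
the two receivers can be made arbitrarily small. -/
def Achievable [Fintype B1] [Fintype B2] (W : A1 → A2 → B1 × B2 → ℝ) (R1 R2 : ℝ) : Prop :=
  0 ≤ R1 ∧ 0 ≤ R2 ∧ ∀ ε : ℝ, 0 < ε →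
    ∃ (n M1 M2 : ℕ) (c : Code A1 A2 B1 B2 n M1 M2), 0 < n ∧
      (2 : ℝ) ^ ((n : ℝ) * R1) ≤ (M1 : ℝ) ∧ (2 : ℝ) ^ ((n : ℝ) * R2) ≤ (M2 : ℝ) ∧
      err1 W c ≤ ε ∧ err2 W c ≤ ε

/-- The sum-rate capacity: the supremum of `R1 + R2` over achievable rate pairs. -/
def sumCapacity [Fintype B1] [Fintype B2] (W : A1 → A2 → B1 × B2 → ℝ) : ℝ :=
  sSup {r : ℝ | ∃ R1 R2 : ℝ, Achievable W R1 R2 ∧ r = R1 + R2}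

/-- The capacity region: the closure of the set of achievable rate pairs. -/
def capacityRegion [Fintype B1] [Fintype B2] (W : A1 → A2 → B1 × B2 → ℝ) : Set (ℝ × ℝ) :=
  closure {p : ℝ × ℝ | Achievable W p.1 p.2}

/-- The joint pmf of `(X1, X2, Y1, Y2)` when the product input `p1 × p2` is fed to `W`. -/
def jointOf (W : A1 → A2 → B1 × B2 → ℝ) (p1 : A1 → ℝ) (p2 : A2 → ℝ) :
    A1 × A2 × B1 × B2 → ℝ :=
  fun z => p1 z.1 * p2 z.2.1 * W z.1 z.2.1 (z.2.2.1, z.2.2.2)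

/-- Coordinate projections on `A1 × A2 × B1 × B2`. -/
def pX1 : A1 × A2 × B1 × B2 → A1 := fun z => z.1
def pX2 : A1 × A2 × B1 × B2 → A2 := fun z => z.2.1
def pY1 : A1 × A2 × B1 × B2 → B1 := fun z => z.2.2.1
def pY2 : A1 × A2 × B1 × B2 → B2 := fun z => z.2.2.2

/-- The binary entropy function (base-2 logarithms). -/
def h2 (t : ℝ) : ℝ := -(t * Real.logb 2 t) - (1 - t) * Real.logb 2 (1 - t)

end IT

/-!
The difference `∑ i, [I(X1i;Y1i) + I(X2i;Y2i)] - I(X1^n;Y1^n) - I(X2^n;Y2^n)` is the expectation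
of a combination of pointwise information densities, which on the support of the joint law
equals `-log F` for an explicit ratio `F`. Weak interference enters through the single-letter law of `Y1i` given
`X1i`: since `Y2^n` depends only on `X2^n`, which is independent of `X1^n`, it is the
composition of `q(· | x1i, ·)` with the law of `Y2i`, and the product over `i` of these
kernels is the composition of `∏ i, q` with `∏ i, p(y2i)`. With this, `μ · F` is dominated by
the sub-probability obtained by drawing `y1^n ~ ∏ i, p(y1i)` and then `x1^n`, `y2^n`, `x2^n`
from posteriors, so `E[F] ≤ 1`, and Gibbs' inequality `E[log F] ≤ 0` finishes the proof.
-/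

namespace IT

open Finset Real

section Distribution

variable {Ω α β γ : Type*} [Fintype Ω]

theorem sum_distOf_mul [Fintype α] [DecidableEq α] (μ : Ω → ℝ) (X : Ω → α) (φ : α → ℝ) :
    ∑ a, distOf μ X a * φ a = ∑ ω, μ ω * φ (X ω) := by
  simp only [distOf, sum_mul, ite_mul, zero_mul]
  rw [sum_comm]
  simp

theorem sum_distOf [Fintype α] [DecidableEq α] (μ : Ω → ℝ) (X : Ω → α) :
    ∑ a, distOf μ X a = ∑ ω, μ ω := by
  simpa using sum_distOf_mul μ X 1

theorem distOf_nonneg [DecidableEq α] {μ : Ω → ℝ} (hμ : ∀ ω, 0 ≤ μ ω) (X : Ω → α) (a : α) :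
    0 ≤ distOf μ X a :=
  sum_nonneg fun ω _ => by split <;> simp [hμ ω]

theorem IsPMF.distOf [Fintype α] [DecidableEq α] {μ : Ω → ℝ} (hμ : IsPMF μ) (X : Ω → α) :
    IsPMF (distOf μ X) :=
  ⟨distOf_nonneg hμ.1 X, by rw [sum_distOf, hμ.2]⟩

theorem distOf_pos [DecidableEq α] {μ : Ω → ℝ} (hμ : ∀ ω, 0 ≤ μ ω) (X : Ω → α) {ω : Ω}
    (hω : 0 < μ ω) : 0 < distOf μ X (X ω) :=
  hω.trans_le <| by
    simpa [distOf] using single_le_sum (f := fun ω' => if X ω' = X ω then μ ω' else 0)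
      (fun ω' _ => by split <;> simp [hμ ω']) (mem_univ ω)

theorem distOf_comp [Fintype α] [DecidableEq α] [DecidableEq β] (μ : Ω → ℝ) (T : Ω → α)
    (g : α → β) : distOf μ (fun ω => g (T ω)) = distOf (distOf μ T) g := by
  funext b
  simpa [distOf, mul_ite] using (sum_distOf_mul μ T fun a => if g a = b then 1 else 0).symm

theorem distOf_eq_sum_pair_fst [Fintype β] [DecidableEq α] [DecidableEq β] (μ : Ω → ℝ)
    (X : Ω → α) (Y : Ω → β) (a : α) :
    distOf μ X a = ∑ b, distOf μ (fun ω => (X ω, Y ω)) (a, b) := by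
  simp only [distOf, Prod.mk.injEq, ite_and]
  rw [sum_comm]
  simp

theorem distOf_eq_sum_pair_snd [Fintype α] [DecidableEq α] [DecidableEq β] (μ : Ω → ℝ)
    (X : Ω → α) (Y : Ω → β) (b : β) :
    distOf μ Y b = ∑ a, distOf μ (fun ω => (X ω, Y ω)) (a, b) := by
  simp only [distOf, Prod.mk.injEq, ite_and]
  rw [sum_comm]
  simp

def infoDensity [DecidableEq α] [DecidableEq β] (μ : Ω → ℝ) (X : Ω → α) (Y : Ω → β) (ω : Ω) :
    ℝ :=
  logb 2 (distOf μ (fun ω => (X ω, Y ω)) (X ω, Y ω)) - logb 2 (distOf μ X (X ω))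
    - logb 2 (distOf μ Y (Y ω))

theorem MI_eq_sum_infoDensity [Fintype α] [DecidableEq α] [Fintype β] [DecidableEq β]
    (μ : Ω → ℝ) (X : Ω → α) (Y : Ω → β) :
    MI μ X Y = ∑ ω, μ ω * infoDensity μ X Y ω := by
  simp only [MI, H, ent, sum_distOf_mul, infoDensity, mul_sub, sum_sub_distrib]
  ring

theorem infoDensity_comp [Fintype γ] [DecidableEq α] [DecidableEq β] [DecidableEq γ]
    (μ : Ω → ℝ) (T : Ω → γ) (f : γ → α) (g : γ → β) (ω : Ω) :
    infoDensity μ (fun ω => f (T ω)) (fun ω => g (T ω)) ω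
      = infoDensity (distOf μ T) f g (T ω) := by
  simp only [infoDensity, distOf_comp μ T f, distOf_comp μ T g,
    distOf_comp μ T fun t => (f t, g t)]

/-- Gibbs' inequality. -/
theorem sum_mul_nonneg_of_eq_neg_logb {μ F G : Ω → ℝ} (hμ : ∀ ω, 0 ≤ μ ω)
    (hG : ∀ ω, 0 < μ ω → 0 < F ω ∧ G ω = -logb 2 (F ω))
    (hsum : ∑ ω, μ ω * F ω ≤ ∑ ω, μ ω) : 0 ≤ ∑ ω, μ ω * G ω := by
  have hlog2 := log_pos one_lt_two
  have hpt : ∀ ω, (μ ω - μ ω * F ω) / log 2 ≤ μ ω * G ω := fun ω => by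
    rcases (hμ ω).eq_or_lt with h | h
    · simp [← h]
    · obtain ⟨hF, hGF⟩ := hG ω h
      rw [hGF, logb, mul_neg, ← mul_div_assoc, ← neg_div, div_le_div_iff_of_pos_right hlog2]
      nlinarith [log_le_sub_one_of_pos hF]
  calc 0 ≤ (∑ ω, μ ω - ∑ ω, μ ω * F ω) / log 2 := div_nonneg (sub_nonneg.2 hsum) hlog2.le
    _ = ∑ ω, (μ ω - μ ω * F ω) / log 2 := by rw [← sum_sub_distrib, sum_div]
    _ ≤ ∑ ω, μ ω * G ω := sum_le_sum fun ω _ => hpt ω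

theorem sum_mul_div_sum_le (f : Ω → ℝ) {c : ℝ} (hc : 0 ≤ c) :
    ∑ ω, f ω * (c / ∑ ω', f ω') ≤ c := by
  rw [← sum_mul, mul_div_left_comm]
  exact mul_le_of_le_one_right hc (div_self_le_one _)

end Distribution

section Product

variable {ι β γ : Type*} [Fintype ι] [DecidableEq ι] [Fintype β]

theorem IsPMF.pi {p : ι → β → ℝ} (hp : ∀ i, IsPMF (p i)) :
    IsPMF fun y : ι → β => ∏ i, p i (y i) :=
  ⟨fun y => prod_nonneg fun i _ => (hp i).1 _, by rw [← Fintype.prod_sum]; simp [(hp _).2]⟩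

theorem sum_ite_apply_eq_prod [DecidableEq β] {p : ι → β → ℝ} (hp : ∀ i, ∑ b, p i b = 1)
    (i : ι) (b : β) : ∑ y : ι → β, (if y i = b then ∏ j, p j (y j) else 0) = p i b := by
  have hsplit : ∀ y : ι → β, (if y i = b then ∏ j, p j (y j) else 0)
      = ∏ j, (if j = i then (if y j = b then p j (y j) else 0) else p j (y j)) := fun y => by
    rw [← mul_prod_erase univ (fun j => p j (y j)) (mem_univ i),
      ← mul_prod_erase univ (fun j => if j = i then (if y j = b then p j (y j) else 0)
        else p j (y j)) (mem_univ i), prod_congr rfl fun j hj => if_neg (ne_of_mem_erase hj),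
      if_pos rfl]
    split_ifs <;> simp
  rw [sum_congr rfl fun y _ => hsplit y,
    ← Fintype.prod_sum fun j c => if j = i then (if c = b then p j c else 0) else p j c]
  simp [hp]

theorem sum_sum_ite_apply_eq_prod [DecidableEq β] [Fintype γ] [DecidableEq γ]
    {p : ι → β × γ → ℝ} (hp : ∀ i, ∑ bc, p i bc = 1) (i : ι) (b : β) (c : γ) :
    ∑ y : ι → β, ∑ z : ι → γ, (if y i = b then if z i = c then ∏ j, p j (y j, z j) else 0 else 0)
      = p i (b, c) := by
  rw [← Fintype.sum_prod_type', ← sum_ite_apply_eq_prod hp i (b, c),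
    ← (Equiv.arrowProdEquivProdArrow ι (fun _ => β) (fun _ => γ)).sum_comp]
  simp [Equiv.arrowProdEquivProdArrow, Prod.ext_iff, ite_and]

end Product

section WeakZ

variable {α β A1 A2 B1 B2 : Type*}

def zChannel (V : A2 → B2 → ℝ) (Q : A1 → B2 → B1 → ℝ) : A1 → A2 → B1 × B2 → ℝ :=
  fun x1 x2 y => V x2 y.2 * Q x1 y.2 y.1

def outLaw [Fintype α] (P : α → ℝ) (V : α → β → ℝ) : β → ℝ :=
  fun b => ∑ a, P a * V a b

/-- The channel from `X1` to `Y1` of `zChannel V Q` when the second input has law `P2`. -/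
def inducedChannel [Fintype A2] [Fintype B2] (P2 : A2 → ℝ) (V : A2 → B2 → ℝ)
    (Q : A1 → B2 → B1 → ℝ) : A1 → B1 → ℝ :=
  fun a => outLaw (outLaw P2 V) (Q a)

theorem outLaw_nonneg [Fintype α] {P : α → ℝ} {V : α → β → ℝ} (hP : ∀ a, 0 ≤ P a)
    (hV : ∀ a b, 0 ≤ V a b) (b : β) : 0 ≤ outLaw P V b :=
  sum_nonneg fun a _ => mul_nonneg (hP a) (hV a b)

theorem IsPMF.outLaw [Fintype α] [Fintype β] {P : α → ℝ} {V : α → β → ℝ} (hP : IsPMF P)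
    (hV : ∀ a, IsPMF (V a)) : IsPMF (outLaw P V) := by
  refine ⟨outLaw_nonneg hP.1 fun a => (hV a).1, ?_⟩
  simp only [IT.outLaw]
  rw [sum_comm]
  simp [← mul_sum, (hV _).2, hP.2]

variable [Fintype B1] [Fintype B2]

theorem IsPMF.inducedChannel [Fintype A2] {P2 : A2 → ℝ} {V : A2 → B2 → ℝ}
    {Q : A1 → B2 → B1 → ℝ} (hP2 : IsPMF P2) (hV : ∀ x2, IsPMF (V x2))
    (hQ : ∀ x1 y2, IsPMF (Q x1 y2)) (a : A1) : IsPMF (inducedChannel P2 V Q a) :=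
  (hP2.outLaw hV).outLaw (hQ a)

theorem IsChannel.zChannel {V : A2 → B2 → ℝ} {Q : A1 → B2 → B1 → ℝ} (hV : ∀ x2, IsPMF (V x2))
    (hQ : ∀ x1 y2, IsPMF (Q x1 y2)) : IsChannel (zChannel V Q) := by
  refine fun x1 x2 => ⟨fun y => mul_nonneg ((hV x2).1 _) ((hQ x1 _).1 _), ?_⟩
  rw [Fintype.sum_prod_type, sum_comm]
  simp [IT.zChannel, ← mul_sum, (hQ _ _).2, (hV _).2]

variable [Fintype A1] [Fintype A2]

theorem IsPMF.jointOf {W : A1 → A2 → B1 × B2 → ℝ} {P1 : A1 → ℝ} {P2 : A2 → ℝ} (hP1 : IsPMF P1)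
    (hP2 : IsPMF P2) (hW : IsChannel W) : IsPMF (jointOf W P1 P2) := by
  refine ⟨fun z => mul_nonneg (mul_nonneg (hP1.1 _) (hP2.1 _)) ((hW _ _).1 _), ?_⟩
  have hW' : ∀ x1 x2, ∑ y1, ∑ y2, W x1 x2 (y1, y2) = 1 := fun x1 x2 => by
    rw [← Fintype.sum_prod_type', (hW x1 x2).2]
  simp [IT.jointOf, Fintype.sum_prod_type, ← mul_sum, hW', hP1.2, hP2.2]

variable (P1 : A1 → ℝ) (P2 : A2 → ℝ) (V : A2 → B2 → ℝ) (Q : A1 → B2 → B1 → ℝ)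

theorem distOf_jointOf_zChannel_X1Y1 [DecidableEq A1] [DecidableEq B1] (a : A1) (c : B1) :
    distOf (jointOf (zChannel V Q) P1 P2) (fun z => (pX1 z, pY1 z)) (a, c)
      = P1 a * inducedChannel P2 V Q a c := by
  simp only [distOf, pX1, pY1, Prod.mk.injEq, jointOf, zChannel, ite_and, Fintype.sum_prod_type,
    sum_ite_irrel, sum_const_zero, sum_ite_eq', mem_univ, ↓reduceIte, inducedChannel, outLaw,
    sum_mul, mul_sum]
  rw [sum_comm]
  exact sum_congr rfl fun _ _ => sum_congr rfl fun _ _ => by ring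

theorem distOf_jointOf_zChannel_X2Y2 [DecidableEq A2] [DecidableEq B2] (hP1 : IsPMF P1)
    (hQ : ∀ x1 y2, IsPMF (Q x1 y2)) (a : A2) (b : B2) :
    distOf (jointOf (zChannel V Q) P1 P2) (fun z => (pX2 z, pY2 z)) (a, b) = P2 a * V a b := by
  simp [distOf, jointOf, zChannel, pX2, pY2, Fintype.sum_prod_type, ite_and, ← mul_sum,
    (hQ _ _).2, ← sum_mul, hP1.2]

theorem distOf_jointOf_zChannel_X1 [DecidableEq A1] (hP2 : IsPMF P2) (hV : ∀ x2, IsPMF (V x2))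
    (hQ : ∀ x1 y2, IsPMF (Q x1 y2)) : distOf (jointOf (zChannel V Q) P1 P2) pX1 = P1 := by
  classical
  funext a
  simp [distOf_eq_sum_pair_fst _ pX1 pY1, distOf_jointOf_zChannel_X1Y1, ← mul_sum,
    (hP2.inducedChannel hV hQ a).2]

theorem distOf_jointOf_zChannel_X2 [DecidableEq A2] (hP1 : IsPMF P1) (hV : ∀ x2, IsPMF (V x2))
    (hQ : ∀ x1 y2, IsPMF (Q x1 y2)) : distOf (jointOf (zChannel V Q) P1 P2) pX2 = P2 := by
  classical
  funext a
  simp [distOf_eq_sum_pair_fst _ pX2 pY2, distOf_jointOf_zChannel_X2Y2 _ _ _ _ hP1 hQ,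
    ← mul_sum, (hV a).2]

theorem distOf_jointOf_zChannel_Y1 [DecidableEq B1] :
    distOf (jointOf (zChannel V Q) P1 P2) pY1 = outLaw P1 (inducedChannel P2 V Q) := by
  classical
  funext c
  simp [distOf_eq_sum_pair_snd _ pX1 pY1, distOf_jointOf_zChannel_X1Y1, outLaw]

theorem distOf_jointOf_zChannel_Y2 [DecidableEq B2] (hP1 : IsPMF P1)
    (hQ : ∀ x1 y2, IsPMF (Q x1 y2)) : distOf (jointOf (zChannel V Q) P1 P2) pY2 = outLaw P2 V := by
  classical
  funext b
  simp [distOf_eq_sum_pair_snd _ pX2 pY2, distOf_jointOf_zChannel_X2Y2 _ _ _ _ hP1 hQ, outLaw]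

variable [DecidableEq A1] [DecidableEq A2] [DecidableEq B1] [DecidableEq B2] {P1 P2 V Q}
  (hP1 : IsPMF P1) (hP2 : IsPMF P2) (hV : ∀ x2, IsPMF (V x2)) (hQ : ∀ x1 y2, IsPMF (Q x1 y2))
  {t : A1 × A2 × B1 × B2}
include hP1 hP2 hV hQ

theorem pos_of_jointOf_zChannel_pos (ht : 0 < jointOf (zChannel V Q) P1 P2 t) :
    0 < inducedChannel P2 V Q t.1 t.2.2.1 ∧ 0 < V t.2.1 t.2.2.2
      ∧ 0 < outLaw P1 (inducedChannel P2 V Q) t.2.2.1 ∧ 0 < outLaw P2 V t.2.2.2 := by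
  have hν := (hP1.jointOf hP2 (.zChannel hV hQ)).1
  have h1 := distOf_pos hν (fun z => (pX1 z, pY1 z)) ht
  have h2 := distOf_pos hν (fun z => (pX2 z, pY2 z)) ht
  have h3 := distOf_pos hν pY1 ht
  have h4 := distOf_pos hν pY2 ht
  rw [distOf_jointOf_zChannel_X1Y1] at h1
  rw [distOf_jointOf_zChannel_X2Y2 _ _ _ _ hP1 hQ] at h2
  rw [distOf_jointOf_zChannel_Y1] at h3
  rw [distOf_jointOf_zChannel_Y2 _ _ _ _ hP1 hQ] at h4
  exact ⟨pos_of_mul_pos_right h1 (hP1.1 _), pos_of_mul_pos_right h2 (hP2.1 _), h3, h4⟩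

theorem infoDensity_jointOf_zChannel_X1Y1 (ht : 0 < jointOf (zChannel V Q) P1 P2 t) :
    infoDensity (jointOf (zChannel V Q) P1 P2) pX1 pY1 t
      = logb 2 (inducedChannel P2 V Q t.1 t.2.2.1)
        - logb 2 (outLaw P1 (inducedChannel P2 V Q) t.2.2.1) := by
  have hx := distOf_pos (hP1.jointOf hP2 (.zChannel hV hQ)).1 pX1 ht
  rw [distOf_jointOf_zChannel_X1 _ _ _ _ hP2 hV hQ] at hx
  rw [infoDensity, distOf_jointOf_zChannel_X1Y1, distOf_jointOf_zChannel_X1 _ _ _ _ hP2 hV hQ,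
    distOf_jointOf_zChannel_Y1]
  simp only [pX1, pY1] at hx ⊢
  rw [logb_mul hx.ne' (pos_of_jointOf_zChannel_pos hP1 hP2 hV hQ ht).1.ne']
  ring

theorem infoDensity_jointOf_zChannel_X2Y2 (ht : 0 < jointOf (zChannel V Q) P1 P2 t) :
    infoDensity (jointOf (zChannel V Q) P1 P2) pX2 pY2 t
      = logb 2 (V t.2.1 t.2.2.2) - logb 2 (outLaw P2 V t.2.2.2) := by
  have hx := distOf_pos (hP1.jointOf hP2 (.zChannel hV hQ)).1 pX2 ht
  rw [distOf_jointOf_zChannel_X2 _ _ _ _ hP1 hV hQ] at hx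
  rw [infoDensity, distOf_jointOf_zChannel_X2Y2 _ _ _ _ hP1 hQ,
    distOf_jointOf_zChannel_X2 _ _ _ _ hP1 hV hQ, distOf_jointOf_zChannel_Y2 _ _ _ _ hP1 hQ]
  simp only [pX2, pY2] at hx ⊢
  rw [logb_mul hx.ne' (pos_of_jointOf_zChannel_pos hP1 hP2 hV hQ ht).2.1.ne']
  ring

end WeakZ

section ChangeOfMeasure

variable {A1 A2 B1 B2 : Type*} [Fintype A1] [Fintype A2] [Fintype B2]

/-- For `R`, `D` laws of `Y2`, `Y1`, the product `jointOf (zChannel V Q) P1 P2 * zRatio` is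
dominated by the law that draws `y1 ~ D`, then `x1` from the posterior of `P1` under
`inducedChannel P2 V Q`, `y2` from the posterior of `R` under `Q x1`, and `x2` from the posterior
of `P2` under `V`. -/
def zRatio (P1 : A1 → ℝ) (P2 : A2 → ℝ) (V : A2 → B2 → ℝ) (Q : A1 → B2 → B1 → ℝ) (R : B2 → ℝ)
    (D : B1 → ℝ) (t : A1 × A2 × B1 × B2) : ℝ :=
  inducedChannel P2 V Q t.1 t.2.2.1 * D t.2.2.1 * R t.2.2.2
    / (outLaw P1 (inducedChannel P2 V Q) t.2.2.1 * outLaw P2 V t.2.2.2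
      * outLaw R (Q t.1) t.2.2.1)

theorem logb_zRatio {P1 : A1 → ℝ} {P2 : A2 → ℝ} {V : A2 → B2 → ℝ} {Q : A1 → B2 → B1 → ℝ}
    {R : B2 → ℝ} {D : B1 → ℝ} {t : A1 × A2 × B1 × B2}
    (hK : 0 < inducedChannel P2 V Q t.1 t.2.2.1) (hD : 0 < D t.2.2.1) (hR : 0 < R t.2.2.2)
    (hd : 0 < outLaw P1 (inducedChannel P2 V Q) t.2.2.1) (hr : 0 < outLaw P2 V t.2.2.2)
    (hκ : 0 < outLaw R (Q t.1) t.2.2.1) :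
    logb 2 (zRatio P1 P2 V Q R D t)
      = logb 2 (inducedChannel P2 V Q t.1 t.2.2.1) + logb 2 (D t.2.2.1) + logb 2 (R t.2.2.2)
        - logb 2 (outLaw P1 (inducedChannel P2 V Q) t.2.2.1) - logb 2 (outLaw P2 V t.2.2.2)
        - logb 2 (outLaw R (Q t.1) t.2.2.1) := by
  rw [zRatio, logb_div (by positivity) (by positivity), logb_mul (by positivity) hR.ne',
    logb_mul hK.ne' hD.ne', logb_mul (by positivity) hκ.ne', logb_mul hd.ne' hr.ne']
  ring

variable [Fintype B1]

theorem sum_jointOf_zChannel_mul_zRatio_le {P1 : A1 → ℝ} {P2 : A2 → ℝ} {V : A2 → B2 → ℝ}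
    {Q : A1 → B2 → B1 → ℝ} {R : B2 → ℝ} {D : B1 → ℝ} (hP1 : ∀ a, 0 ≤ P1 a)
    (hP2 : ∀ a, 0 ≤ P2 a) (hV : ∀ a b, 0 ≤ V a b) (hQ : ∀ a b c, 0 ≤ Q a b c)
    (hR : ∀ b, 0 ≤ R b) (hD : ∀ c, 0 ≤ D c) :
    ∑ t, jointOf (zChannel V Q) P1 P2 t * zRatio P1 P2 V Q R D t ≤ ∑ c, D c := by
  set k := inducedChannel P2 V Q
  have hk : ∀ a c, 0 ≤ k a c := fun a => outLaw_nonneg (outLaw_nonneg hP2 hV) (hQ a)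
  have hd : ∀ c, 0 ≤ outLaw P1 k c := outLaw_nonneg hP1 hk
  have hκ : ∀ a c, 0 ≤ outLaw R (Q a) c := fun a => outLaw_nonneg hR (hQ a)
  let e : A1 × A2 × B1 × B2 ≃ B1 × A1 × B2 × A2 :=
    ⟨fun t => (t.2.2.1, t.1, t.2.2.2, t.2.1), fun w => (w.2.1, w.2.2.2, w.1, w.2.2.1),
      fun _ => rfl, fun _ => rfl⟩
  calc ∑ t, jointOf (zChannel V Q) P1 P2 t * zRatio P1 P2 V Q R D t
      = ∑ y1, ∑ x1, ∑ y2, ∑ x2, P2 x2 * V x2 y2 * ((R y2 * Q x1 y2 y1)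
          * ((P1 x1 * k x1 y1) * (D y1 / outLaw P1 k y1) / outLaw R (Q x1) y1)
          / outLaw P2 V y2) := by
        rw [← e.symm.sum_comp]
        simp only [Fintype.sum_prod_type]
        refine sum_congr rfl fun y1 _ => sum_congr rfl fun x1 _ => sum_congr rfl fun y2 _ =>
          sum_congr rfl fun x2 _ => ?_
        simp only [jointOf, zChannel, zRatio, e, Equiv.coe_fn_symm_mk]
        ring
    _ ≤ ∑ y1, ∑ x1, ∑ y2, (R y2 * Q x1 y2 y1)
          * ((P1 x1 * k x1 y1) * (D y1 / outLaw P1 k y1) / outLaw R (Q x1) y1) := by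
        gcongr with y1 _ x1 _ y2 _
        exact sum_mul_div_sum_le _ (mul_nonneg (mul_nonneg (hR y2) (hQ x1 y2 y1)) (div_nonneg
          (mul_nonneg (mul_nonneg (hP1 x1) (hk x1 y1)) (div_nonneg (hD y1) (hd y1))) (hκ x1 y1)))
    _ ≤ ∑ y1, ∑ x1, (P1 x1 * k x1 y1) * (D y1 / outLaw P1 k y1) := by
        gcongr with y1 _ x1 _
        exact sum_mul_div_sum_le _
          (mul_nonneg (mul_nonneg (hP1 x1) (hk x1 y1)) (div_nonneg (hD y1) (hd y1)))
    _ ≤ ∑ y1, D y1 := by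
        gcongr with y1 _
        exact sum_mul_div_sum_le _ (hD y1)

end ChangeOfMeasure

section Memoryless

variable {α β γ A1 A2 B1 B2 : Type*}

def piKernel (V : α → β → ℝ) (n : ℕ) (x : Fin n → α) (y : Fin n → β) : ℝ :=
  ∏ i, V (x i) (y i)

def piKernel₂ (Q : α → γ → β → ℝ) (n : ℕ) (x : Fin n → α) (y : Fin n → γ) (z : Fin n → β) : ℝ :=
  ∏ i, Q (x i) (y i) (z i)

def marginal [Fintype β] [DecidableEq β] {n : ℕ} (P : (Fin n → β) → ℝ) (i : Fin n) : β → ℝ :=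
  distOf P fun x => x i

theorem IsPMF.marginal [Fintype β] [DecidableEq β] {n : ℕ} {P : (Fin n → β) → ℝ} (hP : IsPMF P)
    (i : Fin n) : IsPMF (marginal P i) :=
  hP.distOf _

theorem nFold_zChannel (V : A2 → B2 → ℝ) (Q : A1 → B2 → B1 → ℝ) (n : ℕ) :
    nFold (zChannel V Q) n = zChannel (piKernel V n) (piKernel₂ Q n) := by
  funext x1 x2 y
  simp [nFold, zChannel, piKernel, piKernel₂, prod_mul_distrib]

theorem outLaw_pi_piKernel₂ [Fintype γ] {n : ℕ} (R : Fin n → γ → ℝ) (Q : α → γ → β → ℝ)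
    (x : Fin n → α) (z : Fin n → β) :
    outLaw (fun y => ∏ i, R i (y i)) (piKernel₂ Q n x) z = ∏ i, outLaw (R i) (Q (x i)) (z i) := by
  simp [outLaw, piKernel₂, ← prod_mul_distrib, Fintype.prod_sum]

variable [Fintype A1] [Fintype A2] [Fintype B1] [Fintype B2]

theorem isPMF_jointOf_nFold_zChannel {n : ℕ} {P1 : (Fin n → A1) → ℝ} {P2 : (Fin n → A2) → ℝ}
    {V : A2 → B2 → ℝ} {Q : A1 → B2 → B1 → ℝ} (hP1 : IsPMF P1) (hP2 : IsPMF P2)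
    (hV : ∀ x2, IsPMF (V x2)) (hQ : ∀ x1 y2, IsPMF (Q x1 y2)) :
    IsPMF (jointOf (nFold (zChannel V Q) n) P1 P2) := by
  rw [nFold_zChannel]
  exact hP1.jointOf hP2 (.zChannel (fun x2 => .pi fun i => hV (x2 i)) fun x1 y2 =>
    .pi fun i => hQ (x1 i) (y2 i))

variable [DecidableEq A1] [DecidableEq A2] [DecidableEq B1] [DecidableEq B2]

theorem distOf_jointOf_nFold_letter {W : A1 → A2 → B1 × B2 → ℝ} (hW : IsChannel W) {n : ℕ}
    (P1 : (Fin n → A1) → ℝ) (P2 : (Fin n → A2) → ℝ) (i : Fin n) :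
    distOf (jointOf (nFold W n) P1 P2) (fun z => (z.1 i, z.2.1 i, z.2.2.1 i, z.2.2.2 i))
      = jointOf W (marginal P1 i) (marginal P2 i) := by
  funext ⟨a1, a2, c, b⟩
  simp only [distOf, jointOf, marginal, Fintype.sum_prod_type, Prod.mk.injEq, ite_and]
  calc _ = ∑ x1 : Fin n → A1, ∑ x2 : Fin n → A2,
        if x1 i = a1 then if x2 i = a2 then P1 x1 * P2 x2 * W a1 a2 (c, b) else 0 else 0 := by
        refine sum_congr rfl fun x1 _ => sum_congr rfl fun x2 _ => ?_
        split_ifs with h1 h2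
        · rw [← h1, ← h2, ← sum_sum_ite_apply_eq_prod (fun j => (hW _ _).2), mul_sum]
          simp only [mul_sum, mul_ite_zero, nFold]
        all_goals simp
    _ = _ := by
        rw [sum_mul_sum, sum_mul]
        simp only [sum_mul, ite_zero_mul, mul_ite_zero]
        exact sum_congr rfl fun _ _ => sum_congr rfl fun _ _ => by split_ifs <;> rfl

theorem infoDensity_jointOf_nFold_letter {W : A1 → A2 → B1 × B2 → ℝ} (hW : IsChannel W) {n : ℕ}
    (P1 : (Fin n → A1) → ℝ) (P2 : (Fin n → A2) → ℝ) (i : Fin n) [DecidableEq α] [DecidableEq β]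
    (f : A1 × A2 × B1 × B2 → α) (g : A1 × A2 × B1 × B2 → β)
    (z : (Fin n → A1) × (Fin n → A2) × (Fin n → B1) × (Fin n → B2)) :
    infoDensity (jointOf (nFold W n) P1 P2) (fun z => f (z.1 i, z.2.1 i, z.2.2.1 i, z.2.2.2 i))
        (fun z => g (z.1 i, z.2.1 i, z.2.2.1 i, z.2.2.2 i)) z
      = infoDensity (jointOf W (marginal P1 i) (marginal P2 i)) f g
          (z.1 i, z.2.1 i, z.2.2.1 i, z.2.2.2 i) := by
  rw [infoDensity_comp, distOf_jointOf_nFold_letter hW]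

end Memoryless

section SingleLetter

variable {A1 A2 B1 B2 : Type*} [Fintype A1] [DecidableEq A1] [Fintype A2] [DecidableEq A2]
  [Fintype B1] [Fintype B2] {n : ℕ}

/-- In terms of the joint law `p` of the blocks this is
`p(y1^n | x1^n) ∏ i, p(y1i) ∏ i, p(y2i) / (p(y1^n) p(y2^n) ∏ i, p(y1i | x1i))`. -/
def letterRatio (P1 : (Fin n → A1) → ℝ) (P2 : (Fin n → A2) → ℝ) (V : A2 → B2 → ℝ)
    (Q : A1 → B2 → B1 → ℝ) : (Fin n → A1) × (Fin n → A2) × (Fin n → B1) × (Fin n → B2) → ℝ :=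
  zRatio P1 P2 (piKernel V n) (piKernel₂ Q n)
    (fun y2 => ∏ i, outLaw (marginal P2 i) V (y2 i))
    (fun y1 => ∏ i, outLaw (marginal P1 i) (inducedChannel (marginal P2 i) V Q) (y1 i))

theorem sum_jointOf_nFold_mul_letterRatio_le_one {P1 : (Fin n → A1) → ℝ}
    {P2 : (Fin n → A2) → ℝ} {V : A2 → B2 → ℝ} {Q : A1 → B2 → B1 → ℝ} (hP1 : IsPMF P1)
    (hP2 : IsPMF P2) (hV : ∀ x2, IsPMF (V x2)) (hQ : ∀ x1 y2, IsPMF (Q x1 y2)) :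
    ∑ z, jointOf (nFold (zChannel V Q) n) P1 P2 z * letterRatio P1 P2 V Q z ≤ 1 := by
  have hR := IsPMF.pi fun i => (hP2.marginal i).outLaw hV
  have hD := IsPMF.pi fun i => (hP1.marginal i).outLaw ((hP2.marginal i).inducedChannel hV hQ)
  rw [nFold_zChannel, ← hD.2]
  exact sum_jointOf_zChannel_mul_zRatio_le hP1.1 hP2.1 (fun a => (IsPMF.pi fun i => hV (a i)).1)
    (fun a b => (IsPMF.pi fun i => hQ (a i) (b i)).1) hR.1 hD.1

variable [DecidableEq B1] [DecidableEq B2]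

def letterGap (μ : (Fin n → A1) × (Fin n → A2) × (Fin n → B1) × (Fin n → B2) → ℝ)
    (z : (Fin n → A1) × (Fin n → A2) × (Fin n → B1) × (Fin n → B2)) : ℝ :=
  ∑ i, (infoDensity μ (fun z => z.1 i) (fun z => z.2.2.1 i) z
      + infoDensity μ (fun z => z.2.1 i) (fun z => z.2.2.2 i) z)
    - (infoDensity μ (fun z => z.1) (fun z => z.2.2.1) z
      + infoDensity μ (fun z => z.2.1) (fun z => z.2.2.2) z)

theorem sum_MI_letters_sub_MI_blocks
    (μ : (Fin n → A1) × (Fin n → A2) × (Fin n → B1) × (Fin n → B2) → ℝ) :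
    ∑ i, (MI μ (fun z => z.1 i) (fun z => z.2.2.1 i) + MI μ (fun z => z.2.1 i) (fun z => z.2.2.2 i))
      - (MI μ (fun z => z.1) (fun z => z.2.2.1) + MI μ (fun z => z.2.1) (fun z => z.2.2.2))
      = ∑ z, μ z * letterGap μ z := by
  simp only [MI_eq_sum_infoDensity, letterGap, mul_sub, mul_add, mul_sum, sum_add_distrib,
    sum_sub_distrib]
  congr 2 <;> exact sum_comm

variable {P1 : (Fin n → A1) → ℝ} {P2 : (Fin n → A2) → ℝ} {V : A2 → B2 → ℝ}
  {Q : A1 → B2 → B1 → ℝ} (hP1 : IsPMF P1) (hP2 : IsPMF P2) (hV : ∀ x2, IsPMF (V x2))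
  (hQ : ∀ x1 y2, IsPMF (Q x1 y2)) {z : (Fin n → A1) × (Fin n → A2) × (Fin n → B1) × (Fin n → B2)}
include hP1 hP2 hV hQ

theorem jointOf_letter_pos (hz : 0 < jointOf (nFold (zChannel V Q) n) P1 P2 z) (i : Fin n) :
    0 < jointOf (zChannel V Q) (marginal P1 i) (marginal P2 i)
      (z.1 i, z.2.1 i, z.2.2.1 i, z.2.2.2 i) := by
  rw [← distOf_jointOf_nFold_letter (.zChannel hV hQ)]
  exact distOf_pos (isPMF_jointOf_nFold_zChannel hP1 hP2 hV hQ).1 _ hz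

theorem infoDensity_letter_add (hz : 0 < jointOf (nFold (zChannel V Q) n) P1 P2 z) (i : Fin n) :
    infoDensity (jointOf (nFold (zChannel V Q) n) P1 P2) (fun z => z.1 i) (fun z => z.2.2.1 i) z
        + infoDensity (jointOf (nFold (zChannel V Q) n) P1 P2) (fun z => z.2.1 i)
          (fun z => z.2.2.2 i) z
      = logb 2 (inducedChannel (marginal P2 i) V Q (z.1 i) (z.2.2.1 i))
        + logb 2 (V (z.2.1 i) (z.2.2.2 i))
        - logb 2 (outLaw (marginal P1 i) (inducedChannel (marginal P2 i) V Q) (z.2.2.1 i))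
        - logb 2 (outLaw (marginal P2 i) V (z.2.2.2 i)) := by
  have hi := jointOf_letter_pos hP1 hP2 hV hQ hz i
  have h1 := infoDensity_jointOf_nFold_letter (.zChannel hV hQ) P1 P2 i pX1 pY1 z
  have h2 := infoDensity_jointOf_nFold_letter (.zChannel hV hQ) P1 P2 i pX2 pY2 z
  rw [infoDensity_jointOf_zChannel_X1Y1 (hP1.marginal i) (hP2.marginal i) hV hQ hi] at h1
  rw [infoDensity_jointOf_zChannel_X2Y2 (hP1.marginal i) (hP2.marginal i) hV hQ hi] at h2
  simp only [pX1, pY1, pX2, pY2] at h1 h2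
  rw [h1, h2]
  ring

theorem infoDensity_block_add (hz : 0 < jointOf (nFold (zChannel V Q) n) P1 P2 z) :
    infoDensity (jointOf (nFold (zChannel V Q) n) P1 P2) (fun z => z.1) (fun z => z.2.2.1) z
        + infoDensity (jointOf (nFold (zChannel V Q) n) P1 P2) (fun z => z.2.1) (fun z => z.2.2.2) z
      = logb 2 (inducedChannel P2 (piKernel V n) (piKernel₂ Q n) z.1 z.2.2.1)
        + logb 2 (piKernel V n z.2.1 z.2.2.2)
        - logb 2 (outLaw P1 (inducedChannel P2 (piKernel V n) (piKernel₂ Q n)) z.2.2.1)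
        - logb 2 (outLaw P2 (piKernel V n) z.2.2.2) := by
  have hVn : ∀ x2, IsPMF (piKernel V n x2) := fun x2 => .pi fun i => hV (x2 i)
  have hQn : ∀ x1 y2, IsPMF (piKernel₂ Q n x1 y2) := fun x1 y2 => .pi fun i => hQ (x1 i) (y2 i)
  rw [nFold_zChannel] at hz ⊢
  have h1 := infoDensity_jointOf_zChannel_X1Y1 hP1 hP2 hVn hQn hz
  have h2 := infoDensity_jointOf_zChannel_X2Y2 hP1 hP2 hVn hQn hz
  change infoDensity _ pX1 pY1 z + infoDensity _ pX2 pY2 z = _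
  rw [h1, h2]
  ring

theorem letterRatio_pos_and_letterGap_eq (hz : 0 < jointOf (nFold (zChannel V Q) n) P1 P2 z) :
    0 < letterRatio P1 P2 V Q z
      ∧ letterGap (jointOf (nFold (zChannel V Q) n) P1 P2) z
        = -logb 2 (letterRatio P1 P2 V Q z) := by
  have hVn : ∀ x2, IsPMF (piKernel V n x2) := fun x2 => .pi fun i => hV (x2 i)
  have hQn : ∀ x1 y2, IsPMF (piKernel₂ Q n x1 y2) := fun x1 y2 => .pi fun i => hQ (x1 i) (y2 i)
  obtain ⟨hK, -, hd, hr⟩ :=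
    pos_of_jointOf_zChannel_pos hP1 hP2 hVn hQn (by rwa [nFold_zChannel] at hz)
  have hletter := fun i => pos_of_jointOf_zChannel_pos (hP1.marginal i) (hP2.marginal i) hV hQ
    (jointOf_letter_pos hP1 hP2 hV hQ hz i)
  have hk : ∀ i, 0 < outLaw (outLaw (marginal P2 i) V) (Q (z.1 i)) (z.2.2.1 i) :=
    fun i => (hletter i).1
  have hVi : ∀ i, 0 < V (z.2.1 i) (z.2.2.2 i) := fun i => (hletter i).2.1
  have hdi : ∀ i, 0 < outLaw (marginal P1 i) (inducedChannel (marginal P2 i) V Q) (z.2.2.1 i) :=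
    fun i => (hletter i).2.2.1
  have hri : ∀ i, 0 < outLaw (marginal P2 i) V (z.2.2.2 i) := fun i => (hletter i).2.2.2
  have hD := prod_pos fun i (_ : i ∈ univ) => hdi i
  have hR := prod_pos fun i (_ : i ∈ univ) => hri i
  have hκ : 0 < outLaw (fun y2 => ∏ i, outLaw (marginal P2 i) V (y2 i)) (piKernel₂ Q n z.1)
      z.2.2.1 := by
    rw [outLaw_pi_piKernel₂]
    exact prod_pos fun i _ => hk i
  refine ⟨div_pos (by positivity) (by positivity), ?_⟩
  rw [letterGap, sum_congr rfl fun i _ => infoDensity_letter_add hP1 hP2 hV hQ hz i,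
    infoDensity_block_add hP1 hP2 hV hQ hz, letterRatio, logb_zRatio hK hD hR hd hr hκ,
    outLaw_pi_piKernel₂, piKernel, logb_prod _ _ fun i _ => (hk i).ne',
    logb_prod _ _ fun i _ => (hVi i).ne', logb_prod _ _ fun i _ => (hdi i).ne',
    logb_prod _ _ fun i _ => (hri i).ne']
  simp only [sum_add_distrib, sum_sub_distrib, inducedChannel]
  ring

end SingleLetter

theorem nLetter_sum_MI_bound_weak_DMZIC_general {A1 A2 B1 B2 : Type} [Fintype A1] [DecidableEq A1] [Fintype A2] [DecidableEq A2]
    [Fintype B1] [DecidableEq B1] [Fintype B2] [DecidableEq B2]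
    (W : A1 → A2 → B1 × B2 → ℝ) (hweak : WeakZ W) (n : ℕ)
    (P1 : (Fin n → A1) → ℝ) (P2 : (Fin n → A2) → ℝ) (hP1 : IsPMF P1) (hP2 : IsPMF P2) :
    let μ : (Fin n → A1) × (Fin n → A2) × (Fin n → B1) × (Fin n → B2) → ℝ :=
      fun z => P1 z.1 * P2 z.2.1 * nFold W n z.1 z.2.1 (z.2.2.1, z.2.2.2)
    MI μ (fun z => z.1) (fun z => z.2.2.1) + MI μ (fun z => z.2.1) (fun z => z.2.2.2)
      ≤ ∑ i : Fin n,
          (MI μ (fun z => z.1 i) (fun z => z.2.2.1 i)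
            + MI μ (fun z => z.2.1 i) (fun z => z.2.2.2 i)) := by
  intro μ
  obtain ⟨V, Q, hV, hQ, hW⟩ := hweak
  obtain rfl : W = zChannel V Q := funext fun x1 => funext fun x2 => funext fun y =>
    hW x1 x2 y.1 y.2
  have hμ : IsPMF μ := isPMF_jointOf_nFold_zChannel hP1 hP2 hV hQ
  rw [← sub_nonneg, sum_MI_letters_sub_MI_blocks]
  exact sum_mul_nonneg_of_eq_neg_logb hμ.1
    (fun z hz => letterRatio_pos_and_letterGap_eq hP1 hP2 hV hQ hz)
    ((sum_jointOf_nFold_mul_letterRatio_le_one hP1 hP2 hV hQ).trans hμ.2.ge)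

/-- For a DMZIC with weak interference used `n` times memorylessly with
independent (but otherwise arbitrary) input blocks,
`I(X1^n;Y1^n) + I(X2^n;Y2^n) ≤ ∑ i, [ I(X1i;Y1i) + I(X2i;Y2i) ]`. -/
theorem nLetter_sum_MI_bound_weak_DMZIC {A1 A2 B1 B2 : Type} [Fintype A1] [DecidableEq A1] [Fintype A2] [DecidableEq A2]
    [Fintype B1] [DecidableEq B1] [Fintype B2] [DecidableEq B2]
    (W : A1 → A2 → B1 × B2 → ℝ) (hW : IsChannel W) (hweak : WeakZ W) (n : ℕ)
    (P1 : (Fin n → A1) → ℝ) (P2 : (Fin n → A2) → ℝ) (hP1 : IsPMF P1) (hP2 : IsPMF P2) :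
    let μ : (Fin n → A1) × (Fin n → A2) × (Fin n → B1) × (Fin n → B2) → ℝ :=
      fun z => P1 z.1 * P2 z.2.1 * nFold W n z.1 z.2.1 (z.2.2.1, z.2.2.2)
    MI μ (fun z => z.1) (fun z => z.2.2.1) + MI μ (fun z => z.2.1) (fun z => z.2.2.2)
      ≤ ∑ i : Fin n,
          (MI μ (fun z => z.1 i) (fun z => z.2.2.1 i)
            + MI μ (fun z => z.2.1 i) (fun z => z.2.2.2 i)) :=
  nLetter_sum_MI_bound_weak_DMZIC_general W hweak n P1 P2 hP1 hP2

end IT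
end
end

section
/- Let a DMZIC with weak interference be used n times memorylessly with input blocks X1^n and X2^n independent of each other, and outputs Y1^n, Y2^n. Then for every i in {1,...,n}, the triple ((X1^{i-1},X1_{i+1}^n), (X1i, Y2^{i-1}), Y1i) forms a Markov chain, i.e., Y1i is conditionally independent of (X1^{i-1},X1_{i+1}^n) given (X1i, Y2^{i-1}). -/
open scoped BigOperators

noncomputable section

/-!
Summing out everything else, the joint law of `(X1^n, Y1i, Y2^{i-1})` is `P1 x1` times a factor
that depends on `x1` only through `x1i`: the event on letter `j ≠ i` constrains only `Y2j`, whose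
law `p(y2|x2)` does not see `x1j`, while letter `i` contributes a term in `x1i, x2i` alone; and
`X2^n`, independent of `X1^n`, is averaged out. A joint law of the form `P x * K (g x) b t` makes
`b` conditionally independent of any function of `x` given `(g x, t)`.
-/

namespace IT

section CondIndep

variable {Ω α β γ : Type*} [Fintype Ω] [DecidableEq α] [DecidableEq β] [DecidableEq γ]
  (μ : Ω → ℝ)

theorem sum_distOf_pair_fst [Fintype α] (A : Ω → α) (X : Ω → β) (x : β) :
    ∑ a, distOf μ (fun ω => (A ω, X ω)) (a, x) = distOf μ X x := by
  simp only [distOf, Prod.mk.injEq, ite_and]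
  rw [Finset.sum_comm]
  simp

theorem sum_distOf_triple_snd [Fintype β] (A : Ω → α) (B : Ω → β) (C : Ω → γ) (a : α) (c : γ) :
    ∑ b, distOf μ (fun ω => (A ω, B ω, C ω)) (a, b, c) = distOf μ (fun ω => (A ω, C ω)) (a, c) := by
  simp only [distOf, Prod.mk.injEq, ite_and]
  rw [Finset.sum_comm]
  simp

theorem condIndep_of_factorization [Fintype α] [Fintype β] (A : Ω → α) (B : Ω → β) (C : Ω → γ)
    (F : α → γ → ℝ) (G : β → γ → ℝ)
    (h : ∀ a b c, distOf μ (fun ω => (A ω, B ω, C ω)) (a, b, c) = F a c * G b c) :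
    CondIndep μ A B C := by
  intro a b c
  have hAC : distOf μ (fun ω => (A ω, C ω)) (a, c) = F a c * ∑ b, G b c := by
    simp only [← sum_distOf_triple_snd μ A B C, h, Finset.mul_sum]
  have hBC : distOf μ (fun ω => (B ω, C ω)) (b, c) = (∑ a, F a c) * G b c := by
    simp only [← sum_distOf_pair_fst μ A (fun ω => (B ω, C ω)), h, Finset.sum_mul]
  have hC : distOf μ C c = (∑ a, F a c) * ∑ b, G b c := by
    simp only [← sum_distOf_pair_fst μ B C, ← sum_distOf_pair_fst μ A (fun ω => (B ω, C ω)), h,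
      Finset.sum_mul_sum]
    exact Finset.sum_comm
  rw [h, hAC, hBC, hC]
  ring

end CondIndep

theorem condIndep_of_distOf_eq_mul {Ω α β γ δ τ : Type*} [Fintype Ω] [Fintype α] [Fintype β]
    [Fintype δ] [DecidableEq α] [DecidableEq β] [DecidableEq γ] [DecidableEq δ] [DecidableEq τ]
    (μ : Ω → ℝ) (X : Ω → α) (B : Ω → β) (T : Ω → τ) (f : α → δ) (g : α → γ) (P : α → ℝ)
    (K : γ → β → τ → ℝ)
    (h : ∀ x b t, distOf μ (fun ω => (X ω, B ω, T ω)) (x, b, t) = P x * K (g x) b t) :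
    CondIndep μ (fun ω => f (X ω)) B (fun ω => (g (X ω), T ω)) := by
  refine condIndep_of_factorization μ _ B _
    (fun a c => ∑ x, if f x = a ∧ g x = c.1 then P x else 0) (fun b c => K c.1 b c.2) ?_
  rintro a b ⟨v, t⟩
  have hpush : distOf μ (fun ω => (f (X ω), B ω, g (X ω), T ω)) (a, b, v, t) =
      ∑ x, if f x = a ∧ g x = v then distOf μ (fun ω => (X ω, B ω, T ω)) (x, b, t) else 0 := by
    simp only [distOf, Finset.ite_sum_zero]
    rw [Finset.sum_comm]
    refine Finset.sum_congr rfl fun ω _ => ?_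
    rw [Finset.sum_eq_single (X ω) (fun x _ hx => by simp [Ne.symm hx]) (by simp)]
    simp only [Prod.mk.injEq, true_and, ← ite_and]
    exact if_congr (by tauto) rfl rfl
  rw [hpush, Finset.sum_mul]
  refine Finset.sum_congr rfl fun x _ => ?_
  split_ifs with hx
  · rw [h, hx.2]
  · rw [zero_mul]

section Channel

variable {A1 A2 B1 B2 : Type*} [Fintype B1] [Fintype B2] (W : A1 → A2 → B1 × B2 → ℝ)

def HasOneSidedInterference : Prop :=
  ∀ x1 x1' x2 y2, ∑ y1, W x1 x2 (y1, y2) = ∑ y1, W x1' x2 (y1, y2)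

variable {W}

theorem WeakZ.hasOneSidedInterference (h : WeakZ W) : HasOneSidedInterference W := by
  obtain ⟨p2, q, -, hq, hWq⟩ := h
  intro x1 x1' x2 y2
  simp only [hWq, ← Finset.mul_sum, (hq _ _).2]

theorem HasOneSidedInterference.sum_ite_snd_eq (hW : HasOneSidedInterference W) (S : B2 → Prop)
    [DecidablePred S] (x1 x1' : A1) (x2 : A2) :
    ∑ y, (if S y.2 then W x1 x2 y else 0) = ∑ y, if S y.2 then W x1' x2 y else 0 := by
  rw [Fintype.sum_prod_type_right, Fintype.sum_prod_type_right]
  refine Finset.sum_congr rfl fun y2 _ => ?_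
  by_cases hS : S y2 <;> simp [hS, hW x1 x1' x2 y2]

theorem sum_ite_forall_nFold {n : ℕ} (x1 : Fin n → A1) (x2 : Fin n → A2)
    (E : Fin n → B1 × B2 → Prop) [∀ j, DecidablePred (E j)] :
    ∑ y, (if ∀ j, E j (y.1 j, y.2 j) then nFold W n x1 x2 y else 0) =
      ∏ j, ∑ z, if E j z then W (x1 j) (x2 j) z else 0 := by
  rw [Fintype.prod_sum, ← (Equiv.arrowProdEquivProdArrow _ _ _).sum_comp]
  refine Fintype.sum_congr _ _ fun y => ?_
  simp [nFold, Fintype.prod_ite_zero]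

theorem HasOneSidedInterference.sum_letter_prefix_nFold_congr [DecidableEq B1] [DecidableEq B2]
    (hW : HasOneSidedInterference W) {n : ℕ} (i : Fin n) {x1 x1' : Fin n → A1}
    (hx : x1 i = x1' i) (x2 : Fin n → A2) (b : B1) (t : {j : Fin n // j < i} → B2) :
    ∑ y : (Fin n → B1) × (Fin n → B2),
        (if y.1 i = b ∧ (fun j : {j // j < i} => y.2 j.1) = t then nFold W n x1 x2 y else 0) =
      ∑ y : (Fin n → B1) × (Fin n → B2),
        if y.1 i = b ∧ (fun j : {j // j < i} => y.2 j.1) = t then nFold W n x1' x2 y else 0 := by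
  classical
  let E : Fin n → B1 × B2 → Prop := fun j z =>
    if j = i then z.1 = b else ∀ h : j < i, z.2 = t ⟨j, h⟩
  have hE : ∀ y : (Fin n → B1) × (Fin n → B2),
      (y.1 i = b ∧ (fun j : {j // j < i} => y.2 j.1) = t) ↔ ∀ j, E j (y.1 j, y.2 j) := by
    intro y
    constructor
    · rintro ⟨hb, ht⟩ j
      by_cases hj : j = i
      · subst hj
        simpa [E] using hb
      · simp only [E, if_neg hj]
        exact fun h => congrFun ht ⟨j, h⟩
    · intro h
      refine ⟨by simpa [E] using h i, funext fun j => ?_⟩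
      simpa [E, j.2.ne, j.2] using h j.1
  have hcyl : ∀ x : Fin n → A1,
      ∑ y : (Fin n → B1) × (Fin n → B2),
        (if y.1 i = b ∧ (fun j : {j // j < i} => y.2 j.1) = t then nFold W n x x2 y else 0) =
      ∏ j, ∑ z, if E j z then W (x j) (x2 j) z else 0 := fun x => by
    rw [← sum_ite_forall_nFold]
    exact Fintype.sum_congr _ _ fun y => if_congr (hE y) rfl rfl
  rw [hcyl, hcyl]
  refine Finset.prod_congr rfl fun j _ => ?_
  by_cases hj : j = i
  · subst hj
    rw [hx]
  · simp only [E, if_neg hj]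
    convert hW.sum_ite_snd_eq (fun y2 => ∀ h : j < i, y2 = t ⟨j, h⟩) (x1 j) (x1' j) (x2 j)

end Channel

section Block

variable {A1 A2 B1 B2 : Type*} [Fintype A1] [Fintype A2] [Fintype B1] [Fintype B2]
  [DecidableEq A1] [DecidableEq B1] [DecidableEq B2] {n : ℕ}

def blockLaw (W : A1 → A2 → B1 × B2 → ℝ) (P1 : (Fin n → A1) → ℝ) (P2 : (Fin n → A2) → ℝ) :
    (Fin n → A1) × (Fin n → A2) × (Fin n → B1) × (Fin n → B2) → ℝ :=
  fun z => P1 z.1 * P2 z.2.1 * nFold W n z.1 z.2.1 z.2.2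

theorem distOf_blockLaw_input_letter_prefix (W : A1 → A2 → B1 × B2 → ℝ)
    (P1 : (Fin n → A1) → ℝ) (P2 : (Fin n → A2) → ℝ) (i : Fin n) (x : Fin n → A1) (b : B1)
    (t : {j : Fin n // j < i} → B2) :
    distOf (blockLaw W P1 P2) (fun z => (z.1, z.2.2.1 i, fun j : {j // j < i} => z.2.2.2 j.1))
        (x, b, t) =
      P1 x * ∑ x2, P2 x2 * ∑ y : (Fin n → B1) × (Fin n → B2),
        if y.1 i = b ∧ (fun j : {j // j < i} => y.2 j.1) = t then nFold W n x x2 y else 0 := by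
  simp only [distOf, blockLaw, Prod.mk.injEq]
  rw [Fintype.sum_prod_type, Finset.sum_eq_single x (fun x1 _ hx1 => by simp [hx1]) (by simp)]
  simp only [true_and, Fintype.sum_prod_type, Finset.mul_sum, mul_ite, mul_zero, mul_assoc]

theorem HasOneSidedInterference.exists_distOf_blockLaw_input_letter_prefix_eq_mul
    {W : A1 → A2 → B1 × B2 → ℝ} (hW : HasOneSidedInterference W) (P1 : (Fin n → A1) → ℝ)
    (P2 : (Fin n → A2) → ℝ) (i : Fin n) :
    ∃ K : A1 → B1 → ({j : Fin n // j < i} → B2) → ℝ, ∀ x b t,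
      distOf (blockLaw W P1 P2) (fun z => (z.1, z.2.2.1 i, fun j : {j // j < i} => z.2.2.2 j.1))
        (x, b, t) = P1 x * K (x i) b t := by
  refine ⟨fun v b t => ∑ x2, P2 x2 * ∑ y : (Fin n → B1) × (Fin n → B2),
    if y.1 i = b ∧ (fun j : {j // j < i} => y.2 j.1) = t then nFold W n (fun _ => v) x2 y else 0,
    fun x b t => ?_⟩
  simp only [distOf_blockLaw_input_letter_prefix,
    hW.sum_letter_prefix_nFold_congr i (x1' := fun _ => x i) rfl]

end Block

theorem weak_DMZIC_per_letter_markov_general {A1 A2 B1 B2 : Type} [Fintype A1] [DecidableEq A1] [Fintype A2]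
    [Fintype B1] [DecidableEq B1] [Fintype B2] [DecidableEq B2]
    (W : A1 → A2 → B1 × B2 → ℝ) (hweak : WeakZ W) (n : ℕ)
    (P1 : (Fin n → A1) → ℝ) (P2 : (Fin n → A2) → ℝ)
    (i : Fin n) :
    let μ : (Fin n → A1) × (Fin n → A2) × (Fin n → B1) × (Fin n → B2) → ℝ :=
      fun z => P1 z.1 * P2 z.2.1 * nFold W n z.1 z.2.1 (z.2.2.1, z.2.2.2)
    CondIndep μ
      (fun z => fun j : {j : Fin n // j ≠ i} => z.1 j.1)
      (fun z => z.2.2.1 i)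
      (fun z => (z.1 i, fun j : {j : Fin n // j < i} => z.2.2.2 j.1)) := by
  obtain ⟨K, hK⟩ :=
    hweak.hasOneSidedInterference.exists_distOf_blockLaw_input_letter_prefix_eq_mul P1 P2 i
  exact condIndep_of_distOf_eq_mul (blockLaw W P1 P2) Prod.fst (fun z => z.2.2.1 i)
    (fun z (j : {j // j < i}) => z.2.2.2 j.1) (fun x (j : {j // j ≠ i}) => x j.1) (fun x => x i)
    P1 K hK

/-- For a weak-interference DMZIC used `n` times with independent input
blocks, for each `i` the triple `((X1^{i-1}, X1_{i+1}^n), (X1i, Y2^{i-1}), Y1i)` forms a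
Markov chain: `Y1i` is conditionally independent of `(X1^{i-1}, X1_{i+1}^n)` given
`(X1i, Y2^{i-1})`. -/
theorem weak_DMZIC_per_letter_markov {A1 A2 B1 B2 : Type} [Fintype A1] [DecidableEq A1] [Fintype A2] [DecidableEq A2]
    [Fintype B1] [DecidableEq B1] [Fintype B2] [DecidableEq B2]
    (W : A1 → A2 → B1 × B2 → ℝ) (hW : IsChannel W) (hweak : WeakZ W) (n : ℕ)
    (P1 : (Fin n → A1) → ℝ) (P2 : (Fin n → A2) → ℝ) (hP1 : IsPMF P1) (hP2 : IsPMF P2)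
    (i : Fin n) :
    let μ : (Fin n → A1) × (Fin n → A2) × (Fin n → B1) × (Fin n → B2) → ℝ :=
      fun z => P1 z.1 * P2 z.2.1 * nFold W n z.1 z.2.1 (z.2.2.1, z.2.2.2)
    CondIndep μ
      (fun z => fun j : {j : Fin n // j ≠ i} => z.1 j.1)
      (fun z => z.2.2.1 i)
      (fun z => (z.1 i, fun j : {j : Fin n // j < i} => z.2.2.2 j.1)) :=
  weak_DMZIC_per_letter_markov_general W hweak n P1 P2 i

end IT
end
end

section
/- For a DMZIC with weak interference with transition probability p(y1,y2|x1,x2) = p(y2|x2) q(y1|x1,y2), consider the modified interference channel with the same inputs (X1,X2), the same receiver-1 output Y1, and receiver-2 output Y2' = (X1,Y2) taking values in X1 x Y2, with transition probability induced by the original channel. Then the modified channel is degraded (the Markov chain (X1,X2) - Y2' - Y1 holds), and the modified channel has exactly the same capacity region as the original DMZIC. -/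
open scoped BigOperators

noncomputable section

namespace IT

/-- The modified channel: same inputs, same receiver-1 output `Y1`, and receiver-2
output `Y2' = (X1, Y2)`. -/
def modZ {A1 A2 B1 B2 : Type} [DecidableEq A1] (W : A1 → A2 → B1 × B2 → ℝ) :
    A1 → A2 → B1 × (A1 × B2) → ℝ :=
  fun x1 x2 y => if y.2.1 = x1 then W x1 x2 (y.1, y.2.2) else 0


def OneSided {A1 A2 B1 B2 : Type*} [Fintype B1] (W : A1 → A2 → B1 × B2 → ℝ) : Prop :=
  ∃ p2 : A2 → B2 → ℝ, ∀ x1 x2 y2, ∑ y1, W x1 x2 (y1, y2) = p2 x2 y2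

section Channel

variable {A1 A2 B1 B2 : Type*} [Fintype B1] [Fintype B2] {W : A1 → A2 → B1 × B2 → ℝ}

theorem WeakZ.chainX2X1Y2Y1 (h : WeakZ W) : ChainX2X1Y2Y1 W := by
  obtain ⟨p2, q, hp2, hq, hfac⟩ := h
  exact ⟨fun _ x2 => p2 x2, q, fun _ x2 => hp2 x2, hq, hfac⟩

theorem WeakZ.oneSided (h : WeakZ W) : OneSided W := by
  obtain ⟨p2, q, -, hq, hfac⟩ := h
  refine ⟨p2, fun x1 x2 y2 => ?_⟩
  simp only [hfac, ← Finset.mul_sum, (hq x1 y2).2, mul_one]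

theorem sum_nFold_ite_snd {n : ℕ} (a : Fin n → A1) (b : Fin n → A2)
    (P : (Fin n → B2) → Prop) [DecidablePred P] :
    ∑ y : (Fin n → B1) × (Fin n → B2), (if P y.2 then nFold W n a b y else 0) =
      ∑ z : Fin n → B2, if P z then ∏ i, ∑ v, W (a i) (b i) (v, z i) else 0 := by
  rw [Fintype.sum_prod_type_right]
  refine Finset.sum_congr rfl fun z _ => ?_
  split_ifs
  · exact (Fintype.prod_sum fun i v => W (a i) (b i) (v, z i)).symm
  · exact Finset.sum_const_zero

theorem OneSided.sum_nFold_ite_snd_eq (hZ : OneSided W) {n : ℕ} (a a' : Fin n → A1)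
    (b : Fin n → A2) (P : (Fin n → B2) → Prop) [DecidablePred P] :
    ∑ y : (Fin n → B1) × (Fin n → B2), (if P y.2 then nFold W n a b y else 0) =
      ∑ y : (Fin n → B1) × (Fin n → B2), (if P y.2 then nFold W n a' b y else 0) := by
  obtain ⟨p2, hp2⟩ := hZ
  simp only [sum_nFold_ite_snd, hp2]

end Channel

theorem Achievable.of_forall_code {A1 A2 B1 B2 B1' B2' : Type*} [Fintype B1] [Fintype B2]
    [Fintype B1'] [Fintype B2'] {W : A1 → A2 → B1 × B2 → ℝ} {W' : A1 → A2 → B1' × B2' → ℝ}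
    (h : ∀ {n M1 M2 : ℕ} (c : Code A1 A2 B1 B2 n M1 M2), 0 < M1 →
      ∃ c' : Code A1 A2 B1' B2' n M1 M2, err1 W' c' ≤ err1 W c ∧ err2 W' c' ≤ err2 W c)
    {R1 R2 : ℝ} (hR : Achievable W R1 R2) : Achievable W' R1 R2 := by
  obtain ⟨hR1, hR2, hcodes⟩ := hR
  refine ⟨hR1, hR2, fun ε hε => ?_⟩
  obtain ⟨n, M1, M2, c, hn, hM1, hM2, he1, he2⟩ := hcodes ε hε
  have hM1pos : 0 < M1 := by exact_mod_cast (Real.rpow_pos_of_pos two_pos _).trans_le hM1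
  obtain ⟨c', he1', he2'⟩ := h c hM1pos
  exact ⟨n, M1, M2, c', hn, hM1, hM2, he1'.trans he1, he2'.trans he2⟩

theorem sum_arrow_prod_ite_fst_eq {ι α β M : Type*} [Fintype ι] [DecidableEq ι] [Fintype α]
    [DecidableEq α] [Fintype β] [AddCommMonoid M] (a : ι → α) (G : (ι → α × β) → M) :
    ∑ y : ι → α × β, (if (fun i => (y i).1) = a then G y else 0) =
      ∑ z : ι → β, G (fun i => (a i, z i)) := by
  rw [Fintype.sum_equiv (Equiv.arrowProdEquivProdArrow ι _ _)
      (fun y => if (fun i => (y i).1) = a then G y else 0)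
      (fun p => if p.1 = a then G (fun i => (p.1 i, p.2 i)) else 0) fun _ => rfl,
    Fintype.sum_prod_type]
  simp

section ModZ

variable {A1 A2 B1 B2 : Type} [DecidableEq A1] {W : A1 → A2 → B1 × B2 → ℝ}

theorem ChainX2X1Y2Y1.modZ_degraded [Fintype B1] [Fintype B2] (h : ChainX2X1Y2Y1 W) :
    ∃ r : A1 × B2 → B1 → ℝ, (∀ y2', IsPMF (r y2')) ∧
      ∀ x1 x2 y1 y2', modZ W x1 x2 (y1, y2') = (∑ y1', modZ W x1 x2 (y1', y2')) * r y2' y1 := by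
  obtain ⟨pa, q, -, hq, hfac⟩ := h
  refine ⟨fun y2' => q y2'.1 y2'.2, fun y2' => hq y2'.1 y2'.2, ?_⟩
  rintro x1 x2 y1 ⟨a, y2⟩
  by_cases ha : a = x1
  · subst ha
    simp only [modZ, if_true, hfac, ← Finset.mul_sum, (hq a y2).2, mul_one]
  · simp [modZ, ha]

theorem nFold_modZ {n : ℕ} (a : Fin n → A1) (b : Fin n → A2) (y1 : Fin n → B1)
    (y2' : Fin n → A1 × B2) :
    nFold (modZ W) n a b (y1, y2') =
      if (fun i => (y2' i).1) = a then nFold W n a b (y1, fun i => (y2' i).2) else 0 := by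
  split_ifs with h
  · subst h
    simp [nFold, modZ]
  · obtain ⟨i, hi⟩ := Function.ne_iff.mp h
    exact Finset.prod_eq_zero (Finset.mem_univ i) (if_neg hi)

variable [Fintype A1] [Fintype B1] [Fintype B2]

theorem sum_nFold_modZ_ite {n : ℕ} (a : Fin n → A1) (b : Fin n → A2)
    (P : (Fin n → B1) → (Fin n → A1 × B2) → Prop) [∀ y1, DecidablePred (P y1)] :
    ∑ y : (Fin n → B1) × (Fin n → A1 × B2), (if P y.1 y.2 then nFold (modZ W) n a b y else 0) =
      ∑ y : (Fin n → B1) × (Fin n → B2),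
        if P y.1 (fun i => (a i, y.2 i)) then nFold W n a b y else 0 := by
  simp only [Fintype.sum_prod_type]
  refine Finset.sum_congr rfl fun y1 _ => ?_
  rw [← sum_arrow_prod_ite_fst_eq a
    (fun y2' => if P y1 y2' then nFold W n a b (y1, fun i => (y2' i).2) else 0)]
  refine Finset.sum_congr rfl fun y2' _ => ?_
  rw [nFold_modZ]
  split_ifs <;> rfl

namespace Code

variable {n M1 M2 : ℕ}

def toModZ (c : Code A1 A2 B1 B2 n M1 M2) : Code A1 A2 B1 (A1 × B2) n M1 M2 :=
  ⟨c.enc1, c.enc2, c.dec1, fun y2' => c.dec2 fun i => (y2' i).2⟩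

def ofModZ (c : Code A1 A2 B1 (A1 × B2) n M1 M2) (w : Fin M1) : Code A1 A2 B1 B2 n M1 M2 :=
  ⟨c.enc1, c.enc2, c.dec1, fun y2 => c.dec2 fun i => (c.enc1 w i, y2 i)⟩

theorem err1_toModZ (c : Code A1 A2 B1 B2 n M1 M2) : err1 (modZ W) c.toModZ = err1 W c := by
  unfold err1
  congr 1
  refine Finset.sum_congr rfl fun w1 _ => Finset.sum_congr rfl fun w2 _ => ?_
  exact sum_nFold_modZ_ite (c.enc1 w1) (c.enc2 w2) fun y1 _ => c.dec1 y1 ≠ w1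

theorem err2_toModZ (c : Code A1 A2 B1 B2 n M1 M2) : err2 (modZ W) c.toModZ = err2 W c := by
  unfold err2
  congr 1
  refine Finset.sum_congr rfl fun w1 _ => Finset.sum_congr rfl fun w2 _ => ?_
  exact sum_nFold_modZ_ite (c.enc1 w1) (c.enc2 w2)
    fun _ y2' => c.dec2 (fun i => (y2' i).2) ≠ w2

theorem err1_ofModZ (c : Code A1 A2 B1 (A1 × B2) n M1 M2) (w : Fin M1) :
    err1 W (c.ofModZ w) = err1 (modZ W) c := by
  unfold err1
  congr 1
  refine Finset.sum_congr rfl fun w1 _ => Finset.sum_congr rfl fun w2 _ => ?_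
  exact (sum_nFold_modZ_ite (c.enc1 w1) (c.enc2 w2) fun y1 _ => c.dec1 y1 ≠ w1).symm

end Code

theorem OneSided.exists_err2_ofModZ_le (hZ : OneSided W)
    {n M1 M2 : ℕ} (c : Code A1 A2 B1 (A1 × B2) n M1 M2) (hM1 : 0 < M1) :
    ∃ w, err2 W (c.ofModZ w) ≤ err2 (modZ W) c := by
  set S : Fin M1 → ℝ := fun w => ∑ w2, ∑ y : (Fin n → B1) × (Fin n → A1 × B2),
    if c.dec2 y.2 ≠ w2 then nFold (modZ W) n (c.enc1 w) (c.enc2 w2) y else 0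
  have herr2 : err2 (modZ W) c = ((M1 : ℝ) * M2)⁻¹ * ∑ w1, S w1 := rfl
  have herr2_ofModZ (w : Fin M1) :
      err2 W (c.ofModZ w) = ((M1 : ℝ) * M2)⁻¹ * ∑ _w1 : Fin M1, S w := by
    unfold err2
    congr 1
    refine Finset.sum_congr rfl fun w1 _ => Finset.sum_congr rfl fun w2 _ => ?_
    rw [sum_nFold_modZ_ite (c.enc1 w) (c.enc2 w2) fun _ y2' => c.dec2 y2' ≠ w2]
    exact hZ.sum_nFold_ite_snd_eq _ _ _ fun y2 => c.dec2 (fun i => (c.enc1 w i, y2 i)) ≠ w2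
  obtain ⟨w, -, hw⟩ := Finset.exists_min_image Finset.univ S ⟨⟨0, hM1⟩, Finset.mem_univ _⟩
  refine ⟨w, ?_⟩
  rw [herr2_ofModZ, herr2]
  gcongr with w1
  exact hw w1 (Finset.mem_univ w1)

theorem OneSided.achievable_modZ_iff (hZ : OneSided W) {R1 R2 : ℝ} :
    Achievable (modZ W) R1 R2 ↔ Achievable W R1 R2 := by
  constructor
  · refine Achievable.of_forall_code fun c hM1 => ?_
    obtain ⟨w, hw⟩ := hZ.exists_err2_ofModZ_le c hM1
    exact ⟨c.ofModZ w, (c.err1_ofModZ w).le, hw⟩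
  · exact Achievable.of_forall_code fun c _ => ⟨c.toModZ, c.err1_toModZ.le, c.err2_toModZ.le⟩

theorem OneSided.capacityRegion_modZ (hZ : OneSided W) :
    capacityRegion (modZ W) = capacityRegion W := by
  simp only [capacityRegion, hZ.achievable_modZ_iff]

end ModZ

theorem modZ_degraded_and_capacity_eq_general {A1 A2 B1 B2 : Type} [Fintype A1] [DecidableEq A1]
    [Fintype B1] [Fintype B2]
    (W : A1 → A2 → B1 × B2 → ℝ) (hweak : WeakZ W) :
    (∃ r : A1 × B2 → B1 → ℝ, (∀ y2', IsPMF (r y2')) ∧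
        ∀ x1 x2 y1 y2', modZ W x1 x2 (y1, y2')
          = (∑ y1', modZ W x1 x2 (y1', y2')) * r y2' y1) ∧
      capacityRegion W = capacityRegion (modZ W) :=
  ⟨hweak.chainX2X1Y2Y1.modZ_degraded, hweak.oneSided.capacityRegion_modZ.symm⟩

/-- For a DMZIC with weak interference, the modified channel with
receiver-2 output `Y2' = (X1, Y2)` is degraded (`(X1,X2) - Y2' - Y1` holds), and it has
exactly the same capacity region as the original channel. -/
theorem modZ_degraded_and_capacity_eq {A1 A2 B1 B2 : Type} [Fintype A1] [DecidableEq A1] [Fintype A2] [DecidableEq A2]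
    [Fintype B1] [DecidableEq B1] [Fintype B2] [DecidableEq B2]
    (W : A1 → A2 → B1 × B2 → ℝ) (hW : IsChannel W) (hweak : WeakZ W) :
    (∃ r : A1 × B2 → B1 → ℝ, (∀ y2', IsPMF (r y2')) ∧
        ∀ x1 x2 y1 y2', modZ W x1 x2 (y1, y2')
          = (∑ y1', modZ W x1 x2 (y1', y2')) * r y2' y1) ∧
      capacityRegion W = capacityRegion (modZ W) :=
  modZ_degraded_and_capacity_eq_general W hweak

end IT
end
end
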